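/- Let T be a finite rooted tree whose internal vertices form a path (a caterpillar), with each leaf and the root assigned one of two colors (straight/dotted), and consider all colorings of the internal (spine) edges subject to the constraint that no vertex has all incoming edges of one color and outgoing edge of the other color. Order such colorings by: C ≤ C' iff C' is obtained from C by changing some dotted internal edges to straight. Then this poset has a unique maximal element, given by greedily coloring internal edges straight whenever admissible. -/

import Mathlib

/- Model of a caterpillar tree with `k` internal vertices on the spine
(vertex `0` is adjacent to the root edge, vertex `i+1` sits above vertex `i`),
root-edge color `r`, and lists `L i` of leaf colors at each vertex
(`true` = straight, `false` = dotted). A spine-edge coloring is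
`c : Fin (k-1) → Bool`, where edge `j` joins vertex `j` (below) to `j+1` (above). -/

/-- Output color of vertex `i` under spine coloring `c`. -/
def spineOut (k : ℕ) (r : Bool) (c : Fin (k - 1) → Bool) (i : Fin k) : Bool :=
  if h : (i : ℕ) = 0 then r
  else c ⟨(i : ℕ) - 1, by omega⟩

/-- List of colors of incoming edges of vertex `i`: its leaves together with the spine
edge above it (if any). -/
def spineIncoming (k : ℕ) (L : Fin k → List Bool) (c : Fin (k - 1) → Bool)
    (i : Fin k) : List Bool :=
  L i ++ (if h : (i : ℕ) + 1 < k then [c ⟨(i : ℕ), by omega⟩] else [])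

/-- Admissibility: no vertex has all incoming edges of one color while its outgoing edge
has the other color. -/
def SpineAdmissible (k : ℕ) (r : Bool) (L : Fin k → List Bool)
    (c : Fin (k - 1) → Bool) : Prop :=
  ∀ i : Fin k,
    ¬ ((∀ b ∈ spineIncoming k L c i, b = true) ∧ spineOut k r c i = false) ∧
    ¬ ((∀ b ∈ spineIncoming k L c i, b = false) ∧ spineOut k r c i = true)

/-! Admissibility at a spine vertex says `all ≤ out ≤ any` for the colours of its incoming
edges (with `false < true`). A spine vertex has at most one incoming internal edge, so `all`
and `any` of its incoming colours, like its outgoing colour, commute with the pointwise join of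
colourings. Hence admissible colourings are closed under join, and being finite and nonempty
they have a greatest element, the join of all of them. -/

section SupClosed

variable {α β : Type*}

lemma supClosed_setOf_le [SemilatticeSup α] [SemilatticeSup β] {f g : α → β}
    (hf : ∀ a b, f (a ⊔ b) = f a ⊔ f b) (hg : ∀ a b, g (a ⊔ b) = g a ⊔ g b) :
    SupClosed {a | f a ≤ g a} := by
  intro a ha b hb
  simp only [Set.mem_ofPred_eq, hf, hg]
  exact sup_le_sup ha hb

lemma SupClosed.isGreatest_sSup [CompleteLattice α] {s : Set α} (hs : SupClosed s)
    (hfin : s.Finite) (hne : s.Nonempty) : IsGreatest s (sSup s) :=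
  ⟨hs.sSup_mem_of_nonempty hfin hne subset_rfl, fun _ ha => le_sSup ha⟩

end SupClosed

section Caterpillar

variable {k : ℕ} {r : Bool} {L : Fin k → List Bool} {c d : Fin (k - 1) → Bool}

lemma spineOut_sup (i : Fin k) :
    spineOut k r (c ⊔ d) i = spineOut k r c i ⊔ spineOut k r d i := by
  unfold spineOut
  split_ifs
  · exact (sup_idem r).symm
  · rfl

lemma all_spineIncoming_sup (i : Fin k) :
    (spineIncoming k L (c ⊔ d) i).all id =
      (spineIncoming k L c i).all id ⊔ (spineIncoming k L d i).all id := by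
  unfold spineIncoming
  split_ifs <;> simp [Bool.and_or_distrib_left]

lemma any_spineIncoming_sup (i : Fin k) :
    (spineIncoming k L (c ⊔ d) i).any id =
      (spineIncoming k L c i).any id ⊔ (spineIncoming k L d i).any id := by
  unfold spineIncoming
  split_ifs <;> simp [Bool.or_assoc, Bool.or_left_comm]

lemma spineAdmissible_iff :
    SpineAdmissible k r L c ↔ ∀ i, (spineIncoming k L c i).all id ≤ spineOut k r c i ∧
      spineOut k r c i ≤ (spineIncoming k L c i).any id := by
  refine forall_congr' fun i => and_congr ?_ ?_ <;>
    cases spineOut k r c i <;> simp [Bool.le_iff_imp]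

lemma supClosed_setOf_spineAdmissible : SupClosed {c | SpineAdmissible k r L c} := by
  simp only [spineAdmissible_iff, Set.ofPred_forall, Set.ofPred_and]
  exact supClosed_iInter fun i =>
    (supClosed_setOf_le (fun _ _ => all_spineIncoming_sup i) (fun _ _ => spineOut_sup i)).inter
      (supClosed_setOf_le (fun _ _ => spineOut_sup i) (fun _ _ => any_spineIncoming_sup i))

end Caterpillar

theorem caterpillar_unique_sup_general (k : ℕ) (r : Bool)
    (L : Fin k → List Bool) (hne : ∃ c, SpineAdmissible k r L c) :
    ∃! cmax : Fin (k - 1) → Bool,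
      SpineAdmissible k r L cmax ∧
      ∀ c : Fin (k - 1) → Bool, SpineAdmissible k r L c →
        ∀ j, c j = true → cmax j = true := by
  simp only [← Bool.le_iff_imp, ← Pi.le_def]
  have hmax := supClosed_setOf_spineAdmissible.isGreatest_sSup (Set.toFinite _) hne
  exact ⟨_, hmax, fun _ hc => IsGreatest.unique (s := {c | SpineAdmissible k r L c}) hc hmax⟩

/-- On a caterpillar, the poset of admissible spine-edge colorings (ordered by
recoloring dotted internal edges to straight, i.e. pointwise with dotted < straight)
has a unique maximal element, which dominates every admissible coloring. -/
theorem caterpillar_unique_sup (k : ℕ) (hk : 1 ≤ k) (r : Bool)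
    (L : Fin k → List Bool) (hne : ∃ c, SpineAdmissible k r L c) :
    ∃! cmax : Fin (k - 1) → Bool,
      SpineAdmissible k r L cmax ∧
      ∀ c : Fin (k - 1) → Bool, SpineAdmissible k r L c →
        ∀ j, c j = true → cmax j = true :=
  caterpillar_unique_sup_general k r L hne
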